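/- arXiv:1209.3964 — 4 statements merged into one kernel-verified Lean document; each statement's English description precedes it below -/
import Mathlib

section
/- Let A > 0 and let (Ω, ℙ) be a probability space. There exists α = α(A) > 0 depending only on A with the following property: for every z ∈ ℂ with z ≠ 0, setting w = conj(z)/|z|, and for every measurable g : Ω → ℂ with |g| ≤ A|z| almost surely and ∫_Ω g dℙ = 0, the function y = Im(g·w) satisfies (|z|² + α² ∫_Ω y² dℙ)^{1/2} ≤ ∫_Ω |z + g| dℙ. Consequently, for every integrable f : Ω → ℂ, (|z|² + α² ∫_Ω y² dℙ)^{1/2} ≤ ∫_Ω |z + f| dℙ + ∫_Ω |f − g| dℙ. -/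
open MeasureTheory Complex

noncomputable section

/-- `F = (F k)_{k ≤ n}` is a martingale on `(Ω, μ)` with respect to the filtration `ff`:
each `F k` (for `k ≤ n`) is integrable, measurable with respect to `ff k`, and
`E[F k | ff (k-1)] = F (k-1)` for `1 ≤ k ≤ n`. -/
structure MartOn {Ω : Type*} [MeasurableSpace Ω] (μ : Measure Ω)
    (ff : ℕ → MeasurableSpace Ω) (n : ℕ) (F : ℕ → Ω → ℂ) : Prop where
  integrable : ∀ k, k ≤ n → Integrable (F k) μ
  adapted : ∀ k, k ≤ n → Measurable[ff k] (F k)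
  mart : ∀ k, 1 ≤ k → k ≤ n → μ[F k | ff (k-1)] =ᵐ[μ] F (k-1)

/-- The `L¹` norm `E|F_n|` of the martingale `F = (F k)_{k ≤ n}`. -/
def l1 {Ω : Type*} [MeasurableSpace Ω] (μ : Measure Ω) (n : ℕ) (F : ℕ → Ω → ℂ) : ℝ :=
  ∫ x, ‖F n x‖ ∂μ

/-- The `H¹` (square function) norm `E (∑_{k=1}^n |ΔF_k|²)^{1/2}`. -/
def h1 {Ω : Type*} [MeasurableSpace Ω] (μ : Measure Ω) (n : ℕ) (F : ℕ → Ω → ℂ) : ℝ :=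
  ∫ x, Real.sqrt (∑ k ∈ Finset.Icc 1 n, ‖F k x - F (k-1) x‖ ^ 2) ∂μ

/-- The previsible norm `E (∑_{k=1}^n E_{k-1}|ΔF_k|²)^{1/2}`. -/
def pnorm {Ω : Type*} [MeasurableSpace Ω] (μ : Measure Ω) (ff : ℕ → MeasurableSpace Ω)
    (n : ℕ) (F : ℕ → Ω → ℂ) : ℝ :=
  ∫ x, Real.sqrt (∑ k ∈ Finset.Icc 1 n,
    (μ[fun y => ‖F k y - F (k-1) y‖ ^ 2 | ff (k-1)]) x) ∂μ

/-- The absolutely summing norm `E ∑_{k=1}^n |ΔF_k|`. -/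
def anorm {Ω : Type*} [MeasurableSpace Ω] (μ : Measure Ω) (n : ℕ) (F : ℕ → Ω → ℂ) : ℝ :=
  ∫ x, ∑ k ∈ Finset.Icc 1 n, ‖F k x - F (k-1) x‖ ∂μ

/-- The previsible norm `E (∑_{k=1}^n E_{k-1}|d_k|²)^{1/2}` of a (real-valued)
martingale difference sequence `d = (d k)_{1 ≤ k ≤ n}`, used for martingale transforms. -/
def pnormR {Ω : Type*} [MeasurableSpace Ω] (μ : Measure Ω) (ff : ℕ → MeasurableSpace Ω)
    (n : ℕ) (d : ℕ → Ω → ℝ) : ℝ :=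
  ∫ x, Real.sqrt (∑ k ∈ Finset.Icc 1 n, (μ[fun y => (d k y) ^ 2 | ff (k-1)]) x) ∂μ

/-- `conj v / |v|`, set to `1` at `v = 0`. -/
def unitDir (v : ℂ) : ℂ := if v = 0 then 1 else (starRingEnd ℂ) v / (‖v‖ : ℂ)

/-!
Multiplying by `w` turns `z + g` into `u = |z| + g w`, which has mean `|z|`, modulus at most
`M = (1 + A)|z|` and imaginary part `y`. Since `(Im u)² = (|u| - Re u)(|u| + Re u)
≤ 2M (|u| - Re u)`, taking expectations gives `∫ y² ≤ 2(1 + A)|z| (∫ |z + g| - |z|)`, hence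
`|z|² + ∫ y² / (1 + A) ≤ |z|² + 2|z| (∫ |z + g| - |z|) ≤ (∫ |z + g|)²` and `α = (1 + A)^{-1/2}`
works. The second inequality adds the triangle inequality `|z + g| ≤ |z + f| + |f - g|`.
-/

open ComplexConjugate

namespace Complex

theorem im_sq_le_two_mul_mul_norm_sub_re {u : ℂ} {M : ℝ} (hu : ‖u‖ ≤ M) :
    u.im ^ 2 ≤ 2 * M * (‖u‖ - u.re) := by
  have hre := sub_nonneg.2 (re_le_norm u)
  nlinarith [sq_norm_sub_sq_re u, mul_nonneg hre (sub_nonneg.2 hu),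
    mul_nonneg hre (sub_nonneg.2 (hu.trans' (re_le_norm u)))]

theorem mul_conj_div_norm (z : ℂ) : z * (conj z / ‖z‖) = ‖z‖ := by
  rcases eq_or_ne z 0 with rfl | hz
  · simp
  rw [mul_div_assoc', RCLike.mul_conj, div_eq_iff (by simpa using hz)]
  exact sq _

theorem norm_conj_div_norm {z : ℂ} (hz : z ≠ 0) : ‖conj z / ‖z‖‖ = 1 := by
  simp [hz]

end Complex

section Integral

variable {Ω : Type*} [MeasurableSpace Ω] {μ : Measure Ω}

theorem integral_im_sq_le {h : Ω → ℂ} {M : ℝ} (hh : Integrable h μ)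
    (hM : ∀ᵐ x ∂μ, ‖h x‖ ≤ M) :
    ∫ x, (h x).im ^ 2 ∂μ ≤ 2 * M * (∫ x, ‖h x‖ ∂μ - (∫ x, h x ∂μ).re) := by
  have hpt : ∀ᵐ x ∂μ, (h x).im ^ 2 ≤ 2 * M * (‖h x‖ - (h x).re) := by
    filter_upwards [hM] with x hx using im_sq_le_two_mul_mul_norm_sub_re hx
  have hre : Integrable (fun x => (h x).re) μ := hh.re
  have hbound : Integrable (fun x => 2 * M * (‖h x‖ - (h x).re)) μ :=
    (hh.norm.sub hre).const_mul _
  have him : Integrable (fun x => (h x).im ^ 2) μ := by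
    refine hbound.mono' (hh.im.aestronglyMeasurable.pow 2) ?_
    filter_upwards [hpt] with x hx
    rwa [Real.norm_of_nonneg (sq_nonneg _)]
  calc ∫ x, (h x).im ^ 2 ∂μ ≤ ∫ x, 2 * M * (‖h x‖ - (h x).re) ∂μ :=
        integral_mono_ae him hbound hpt
    _ = 2 * M * (∫ x, ‖h x‖ ∂μ - (∫ x, h x ∂μ).re) := by
      rw [integral_const_mul, integral_sub hh.norm hre]
      exact congrArg _ (congrArg _ (integral_re hh))

theorem integral_norm_sub_le {E : Type*} [NormedAddCommGroup E] {u v : Ω → E}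
    (hu : Integrable u μ) (hv : Integrable v μ) :
    ∫ x, ‖u x - v x‖ ∂μ ≤ (∫ x, ‖u x‖ ∂μ) + ∫ x, ‖v x‖ ∂μ := by
  rw [← integral_add hu.norm hv.norm]
  exact integral_mono (hu.sub hv).norm (hu.norm.add hv.norm) fun x => norm_sub_le _ _

theorem integral_im_sq_mul_conj_div_norm_le [IsProbabilityMeasure μ] {A : ℝ} {z : ℂ}
    (hz : z ≠ 0) {g : Ω → ℂ} (hg : Integrable g μ)
    (hgA : ∀ᵐ x ∂μ, ‖g x‖ ≤ A * ‖z‖) (hg0 : ∫ x, g x ∂μ = 0) :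
    ∫ x, (g x * (conj z / ‖z‖)).im ^ 2 ∂μ
      ≤ 2 * ((1 + A) * ‖z‖) * (∫ x, ‖z + g x‖ ∂μ - ‖z‖) := by
  set w := conj z / (‖z‖ : ℂ)
  have hw : ‖w‖ = 1 := norm_conj_div_norm hz
  have hrot : ∀ x, (z + g x) * w = ‖z‖ + g x * w := fun x => by
    rw [add_mul, mul_conj_div_norm]
  have hM : ∀ᵐ x ∂μ, ‖(z + g x) * w‖ ≤ (1 + A) * ‖z‖ := by
    filter_upwards [hgA] with x hx
    rw [norm_mul, hw, mul_one]
    exact (norm_add_le _ _).trans (by linarith)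
  have hmean : ∫ x, (z + g x) * w ∂μ = ‖z‖ := by
    rw [integral_mul_const, integral_add (integrable_const z) hg, hg0, integral_const]
    simpa using mul_conj_div_norm z
  have hvar := integral_im_sq_le (h := fun x => (z + g x) * w)
    (((integrable_const z).add hg).mul_const w) hM
  simp only [hmean, ofReal_re, norm_mul, hw, mul_one] at hvar
  simpa only [hrot, add_im, ofReal_im, zero_add] using hvar

end Integral

theorem Real.sqrt_sq_add_inv_mul_le {r s c Y : ℝ} (hc : 0 < c) (hs : 0 ≤ s)
    (hY : Y ≤ 2 * (c * r) * (s - r)) :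
    √(r ^ 2 + c⁻¹ * Y) ≤ s := by
  have hY' : c⁻¹ * Y ≤ 2 * r * (s - r) := by
    rw [inv_mul_le_iff₀ hc]
    linarith
  rw [Real.sqrt_le_left hs]
  nlinarith [sq_nonneg (s - r)]

/-- For every `A > 0` there is `α = α(A) > 0` such that on any probability space, for
`z ≠ 0`, `w = conj z / |z|`, and measurable `g` with `|g| ≤ A|z|` a.s. and `∫ g = 0`,
the function `y = Im (g·w)` satisfies `(|z|² + α² ∫ y²)^{1/2} ≤ ∫ |z + g|`; consequently
for every integrable `f`, `(|z|² + α² ∫ y²)^{1/2} ≤ ∫ |z + f| + ∫ |f - g|`. -/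
theorem pointwise_lower_estimate (A : ℝ) (hA : 0 < A) :
    ∃ α : ℝ, 0 < α ∧
    ∀ (Ω : Type) [MeasurableSpace Ω] (μ : Measure Ω), IsProbabilityMeasure μ →
    ∀ z : ℂ, z ≠ 0 →
    ∀ g : Ω → ℂ, Measurable g → (∀ᵐ x ∂μ, ‖g x‖ ≤ A * ‖z‖) →
      (∫ x, g x ∂μ) = 0 →
      (Real.sqrt ((‖z‖) ^ 2
          + α ^ 2 * ∫ x, ((g x * ((starRingEnd ℂ) z / (‖z‖ : ℂ))).im) ^ 2 ∂μ)
        ≤ ∫ x, ‖z + g x‖ ∂μ)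
      ∧ ∀ f : Ω → ℂ, Integrable f μ →
          Real.sqrt ((‖z‖) ^ 2
            + α ^ 2 * ∫ x, ((g x * ((starRingEnd ℂ) z / (‖z‖ : ℂ))).im) ^ 2 ∂μ)
          ≤ (∫ x, ‖z + f x‖ ∂μ) + ∫ x, ‖f x - g x‖ ∂μ := by
  refine ⟨√(1 + A)⁻¹, by positivity, fun Ω _ μ _ z hz g hgm hgA hg0 => ?_⟩
  have hg : Integrable g μ :=
    (integrable_const (A * ‖z‖)).mono' hgm.aestronglyMeasurable (by simpa using hgA)
  have main :
      √(‖z‖ ^ 2 + √(1 + A)⁻¹ ^ 2 * ∫ x, (g x * (conj z / ‖z‖)).im ^ 2 ∂μ)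
        ≤ ∫ x, ‖z + g x‖ ∂μ := by
    rw [Real.sq_sqrt (by positivity)]
    exact Real.sqrt_sq_add_inv_mul_le (by positivity) (integral_nonneg fun _ => norm_nonneg _)
      (integral_im_sq_mul_conj_div_norm_le hz hg hgA hg0)
  refine ⟨main, fun f hf => main.trans ?_⟩
  calc ∫ x, ‖z + g x‖ ∂μ = ∫ x, ‖(z + f x) - (f x - g x)‖ ∂μ := by
        congr 1 with x; congr 1; abel
    _ ≤ _ := integral_norm_sub_le ((integrable_const z).add hf) (hf.sub hg)
end
end

section
/- Let A > 0 and let (Ω, ℙ) be a probability space. There exists α = α(A) > 0 depending only on A such that for every measurable g : Ω → ℂ with |g| ≤ A almost surely and ∫_Ω g dℙ = 0, the function u = Im(g) satisfies (1 + α² ∫_Ω u² dℙ)^{1/2} ≤ ∫_Ω |1 + g| dℙ. -/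
/-!
With `r = Re (1 + z)` and `s = |1 + z|` one has `s² - r² = (Im z)²` and `s + r ≤ 2 (1 + A)`, so
`|1 + z| ≥ 1 + Re z + (Im z)² / (2 (1 + A))` whenever `|z| ≤ A`. Integrating with `z = g`, the
mean-zero condition kills `Re g`, giving `∫ |1 + g| ≥ 1 + α ∫ u²` for `α = 1 / (2 (1 + A))`, and
`1 + α t ≥ √(1 + α² t)` since `α ≤ 2`.
-/

open MeasureTheory Complex

noncomputable section

lemma one_add_re_add_inv_mul_im_sq_le_norm_one_add {A : ℝ} {z : ℂ} (hz : ‖z‖ ≤ A) :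
    1 + z.re + (2 * (1 + A))⁻¹ * z.im ^ 2 ≤ ‖1 + z‖ := by
  have hr : 1 + z.re ≤ ‖1 + z‖ := by
    simpa using re_le_norm (1 + z)
  have hsq : ‖1 + z‖ ^ 2 = (1 + z.re) ^ 2 + z.im ^ 2 := by
    rw [Complex.sq_norm, normSq_apply]
    simp only [add_re, one_re, add_im, one_im, zero_add]
    ring
  have hsum : ‖1 + z‖ + (1 + z.re) ≤ 2 * (1 + A) := by
    linarith [norm_add_le (1 : ℂ) z, norm_one (α := ℂ), re_le_norm z]
  have hpos : 0 < 2 * (1 + A) := by linarith [norm_nonneg z]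
  have hgap : (2 * (1 + A))⁻¹ * z.im ^ 2 ≤ ‖1 + z‖ - (1 + z.re) := by
    rw [inv_mul_le_iff₀ hpos]
    nlinarith [mul_nonneg (sub_nonneg.2 hr) (sub_nonneg.2 hsum)]
  linarith

lemma sqrt_one_add_sq_mul_le_one_add_mul {c t : ℝ} (hc : 0 ≤ c) (hc2 : c ≤ 2) (ht : 0 ≤ t) :
    √(1 + c ^ 2 * t) ≤ 1 + c * t := by
  rw [Real.sqrt_le_left (by positivity)]
  nlinarith [mul_nonneg (mul_nonneg hc ht) (sub_nonneg.2 hc2), sq_nonneg (c * t)]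

lemma one_add_inv_mul_integral_im_sq_le_integral_norm_one_add {Ω : Type*} [MeasurableSpace Ω]
    {μ : Measure Ω} [IsProbabilityMeasure μ] {g : Ω → ℂ} {A : ℝ}
    (hg : AEStronglyMeasurable g μ) (hbound : ∀ᵐ x ∂μ, ‖g x‖ ≤ A) (hmean : ∫ x, g x ∂μ = 0) :
    1 + (2 * (1 + A))⁻¹ * ∫ x, (g x).im ^ 2 ∂μ ≤ ∫ x, ‖1 + g x‖ ∂μ := by
  set c := (2 * (1 + A))⁻¹
  have hg_int : Integrable g μ := .of_bound hg A hbound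
  have hre_int : Integrable (fun x => (g x).re) μ := hg_int.re
  have hone_add_re_int : Integrable (fun x => 1 + (g x).re) μ := (integrable_const 1).add hre_int
  have him_sq_int : Integrable (fun x => (g x).im ^ 2) μ := by
    refine .of_bound (hg.im.pow 2) (A ^ 2) ?_
    filter_upwards [hbound] with x hx
    rw [norm_pow, Real.norm_eq_abs]
    exact pow_le_pow_left₀ (abs_nonneg _) ((abs_im_le_norm _).trans hx) 2
  have hre_mean : ∫ x, (g x).re ∂μ = 0 := by
    simpa [hmean] using integral_re hg_int
  calc 1 + c * ∫ x, (g x).im ^ 2 ∂μ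
      = ∫ x, (1 + (g x).re + c * (g x).im ^ 2) ∂μ := by
        rw [integral_add hone_add_re_int (him_sq_int.const_mul c),
          integral_add (integrable_const 1) hre_int, integral_const_mul, hre_mean]
        simp
    _ ≤ ∫ x, ‖1 + g x‖ ∂μ := by
        refine integral_mono_ae (hone_add_re_int.add (him_sq_int.const_mul c))
          ((integrable_const 1).add hg_int).norm ?_
        filter_upwards [hbound] with x hx
        exact one_add_re_add_inv_mul_im_sq_le_norm_one_add hx

/-- For every `A > 0` there is `α = α(A) > 0` such that on any probability space, for
every measurable `g` with `|g| ≤ A` a.s. and `∫ g = 0`, the function `u = Im g`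
satisfies `(1 + α² ∫ u²)^{1/2} ≤ ∫ |1 + g|`. -/
theorem pointwise_lower_estimate_at_one (A : ℝ) (hA : 0 < A) :
    ∃ α : ℝ, 0 < α ∧
    ∀ (Ω : Type) [MeasurableSpace Ω] (μ : Measure Ω), IsProbabilityMeasure μ →
    ∀ g : Ω → ℂ, Measurable g → (∀ᵐ x ∂μ, ‖g x‖ ≤ A) →
      (∫ x, g x ∂μ) = 0 →
      Real.sqrt (1 + α ^ 2 * ∫ x, ((g x).im) ^ 2 ∂μ)
        ≤ ∫ x, ‖1 + g x‖ ∂μ := by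
  refine ⟨(2 * (1 + A))⁻¹, by positivity, fun Ω _ μ _ g hg hbound hmean => ?_⟩
  have hα_le_two : (2 * (1 + A))⁻¹ ≤ 2 := by
    rw [inv_le_iff_one_le_mul₀ (by positivity)]
    linarith
  exact (sqrt_one_add_sq_mul_le_one_add_mul (by positivity) hα_le_two
    (integral_nonneg fun _ => sq_nonneg _)).trans
    (one_add_inv_mul_integral_im_sq_le_integral_norm_one_add hg.aestronglyMeasurable hbound hmean)
end
end

section
/- Fix 0 < α ≤ 1 and C ≥ 1, and a probability space (Ω, ℙ). There exists δ = δ(α, C) > 0 with the following property: let σ : Ω → ℂ satisfy ∫σ dℙ = 0, |σ| ≤ 1 almost surely and ∫|σ|² dℙ > α; let z ∈ ℂ with z ≠ 0 and w = conj(z)/|z|; let g : Ω → ℂ satisfy ∫g dℙ = 0 and |g| ≤ C|z| almost surely. Then for every b ∈ ℂ, the function y = Im((g − bσ)·w) satisfies (|z|² + δ² ∫ y² dℙ)^{1/2} ≤ ∫ |z + g − bσ| dℙ. Consequently, for every integrable f : Ω → ℂ, (|z|² + δ² ∫ y² dℙ)^{1/2} ≤ ∫ |z + f − bσ| dℙ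 + ∫ |f − g| dℙ. -/
open MeasureTheory Complex

noncomputable section

/-! Rotating by `w = conj z / |z|` turns `|z + g - bσ|` into `|r + u|`, where `r = |z|` and
`u = (g - bσ) w` has mean zero and `|u| ≤ C r + |b|`. When `α |b| ≤ 4 (1 + C) r`, `u` is bounded by
a fixed multiple of `r`, and the pointwise inequality `Re v + (Im v)² / (2R) ≤ |v|` for `|v| ≤ R`
integrates (using `E Re u = 0`) to a lower bound `r + c E (Im u)² / r` for `E |r + u|`, which
dominates `√(r² + δ² E (Im u)²)`. When `|b|` is larger the term `bσ` wins:
`E |z + g - bσ| ≥ |b| E |σ| - (1 + C) r ≥ α |b| - (1 + C) r`, which exceeds the crude bound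
`r + δ (C r + |b|)` for the left-hand side. The perturbed estimate is the triangle inequality
in `L¹`. -/

theorem Complex.re_add_im_sq_div_le_norm {v : ℂ} {R : ℝ} (hR : 0 < R) (hv : ‖v‖ ≤ R) :
    v.re + v.im ^ 2 / (2 * R) ≤ ‖v‖ := by
  have hsq : ‖v‖ ^ 2 = v.re ^ 2 + v.im ^ 2 := by
    rw [Complex.sq_norm, Complex.normSq_apply]; ring
  have hre := Complex.abs_re_le_norm v
  rw [abs_le] at hre
  -- `v.im² = (‖v‖ - v.re)(‖v‖ + v.re)` and the second factor is at most `2R`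
  have him : v.im ^ 2 ≤ (‖v‖ - v.re) * (2 * R) := by nlinarith
  have := (div_le_iff₀ (by positivity : (0 : ℝ) < 2 * R)).2 him
  linarith

theorem Complex.norm_conj_div_norm_s7 {z : ℂ} (hz : z ≠ 0) :
    ‖(starRingEnd ℂ) z / (‖z‖ : ℂ)‖ = 1 := by
  rw [norm_div, Complex.norm_conj, Complex.norm_real, Real.norm_of_nonneg (norm_nonneg z),
    div_self (norm_ne_zero_iff.2 hz)]

theorem Complex.norm_add_eq_norm_ofReal_norm_add_mul {z : ℂ} (hz : z ≠ 0) (v : ℂ) :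
    ‖z + v‖ = ‖(‖z‖ : ℂ) + v * ((starRingEnd ℂ) z / (‖z‖ : ℂ))‖ := by
  have hr : (‖z‖ : ℂ) ≠ 0 := by exact_mod_cast norm_ne_zero_iff.2 hz
  have hzw : z * ((starRingEnd ℂ) z / (‖z‖ : ℂ)) = ‖z‖ := by
    rw [mul_div_assoc', Complex.mul_conj, Complex.normSq_eq_norm_sq, div_eq_iff hr]
    push_cast; ring
  have hrot : (‖z‖ : ℂ) + v * ((starRingEnd ℂ) z / (‖z‖ : ℂ))
      = (z + v) * ((starRingEnd ℂ) z / (‖z‖ : ℂ)) := by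
    rw [add_mul, hzw]
  rw [hrot, norm_mul, Complex.norm_conj_div_norm_s7 hz, mul_one]

theorem MeasureTheory.integral_norm_le_integral_norm_add_integral_norm_sub
    {Ω E : Type*} [MeasurableSpace Ω] [NormedAddCommGroup E] {μ : Measure Ω} {F G : Ω → E}
    (hF : Integrable F μ) (hG : Integrable G μ) :
    ∫ x, ‖F x‖ ∂μ ≤ ∫ x, ‖G x‖ ∂μ + ∫ x, ‖G x - F x‖ ∂μ := by
  have hGF : Integrable (fun x => ‖G x - F x‖) μ := (hG.sub hF).norm
  rw [← integral_add hG.norm hGF]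
  exact integral_mono hF.norm (hG.norm.add hGF) fun x => norm_le_norm_add_norm_sub (G x) (F x)

section ProbabilitySpace

variable {Ω : Type*} [MeasurableSpace Ω] {μ : Measure Ω} [IsProbabilityMeasure μ]

theorem sqrt_sq_add_mul_integral_im_sq_le_integral_norm_of_integral_eq_zero {u : Ω → ℂ}
    {r M δ : ℝ} (hr : 0 < r) (hu : AEStronglyMeasurable u μ) (hM : ∀ᵐ x ∂μ, ‖u x‖ ≤ M)
    (hmean : ∫ x, u x ∂μ = 0) (hδ : δ ^ 2 * (r + M) ≤ r) :
    √(r ^ 2 + δ ^ 2 * ∫ x, (u x).im ^ 2 ∂μ) ≤ ∫ x, ‖(r : ℂ) + u x‖ ∂μ := by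
  obtain ⟨x₀, hx₀⟩ := hM.exists
  have hR : 0 < r + M := by linarith [norm_nonneg (u x₀)]
  set I := ∫ x, (u x).im ^ 2 ∂μ
  have hI : 0 ≤ I := integral_nonneg fun x => sq_nonneg _
  have hu_int : Integrable u μ := .of_bound hu M hM
  have him_int : Integrable (fun x => (u x).im ^ 2) μ := by
    refine .of_bound (hu.im.pow 2) (M ^ 2) ?_
    filter_upwards [hM] with x hx
    rw [Real.norm_eq_abs, abs_pow]
    exact pow_le_pow_left₀ (abs_nonneg _) ((Complex.abs_im_le_norm _).trans hx) 2
  have hsqrt : √(r ^ 2 + δ ^ 2 * I) ≤ r + I / (2 * (r + M)) := by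
    rw [Real.sqrt_le_left (by positivity)]
    have : δ ^ 2 * I ≤ r * I / (r + M) := by
      rw [le_div_iff₀ hR]; nlinarith
    have : r * I / (r + M) = 2 * r * (I / (2 * (r + M))) := by field_simp
    nlinarith [sq_nonneg (I / (2 * (r + M)))]
  have hre_int : Integrable (fun x => (u x).re) μ := hu_int.re
  have hmean_re : ∫ x, (u x).re ∂μ = 0 := by
    simpa [hmean] using integral_re hu_int
  have hlin_int : Integrable (fun x => r + (u x).re) μ := (integrable_const r).add hre_int
  have hlower :
      r + I / (2 * (r + M)) = ∫ x, (r + (u x).re + (u x).im ^ 2 / (2 * (r + M))) ∂μ := by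
    rw [integral_add hlin_int (him_int.div_const _),
      integral_add (integrable_const r) hre_int, integral_div]
    simp [hmean_re, I]
  have hpointwise :
      ∀ᵐ x ∂μ, r + (u x).re + (u x).im ^ 2 / (2 * (r + M)) ≤ ‖(r : ℂ) + u x‖ := by
    filter_upwards [hM] with x hx
    have hbd : ‖(r : ℂ) + u x‖ ≤ r + M := by
      grw [norm_add_le, Complex.norm_real, Real.norm_of_nonneg hr.le, hx]
    simpa [add_assoc] using Complex.re_add_im_sq_div_le_norm hR hbd
  calc √(r ^ 2 + δ ^ 2 * I) ≤ r + I / (2 * (r + M)) := hsqrt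
    _ = _ := hlower
    _ ≤ _ := integral_mono_ae (hlin_int.add (him_int.div_const _))
        (((integrable_const _).add hu_int).norm) hpointwise

theorem sqrt_sq_add_mul_integral_im_sq_le {u : Ω → ℂ} {r M δ : ℝ} (hr : 0 ≤ r) (hδ : 0 ≤ δ)
    (hM : ∀ᵐ x ∂μ, ‖u x‖ ≤ M) :
    √(r ^ 2 + δ ^ 2 * ∫ x, (u x).im ^ 2 ∂μ) ≤ r + δ * M := by
  obtain ⟨x₀, hx₀⟩ := hM.exists
  have hM0 : 0 ≤ M := (norm_nonneg _).trans hx₀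
  have hI : ∫ x, (u x).im ^ 2 ∂μ ≤ M ^ 2 := by
    have := integral_mono_of_nonneg (.of_forall fun x => sq_nonneg (u x).im)
      (integrable_const (M ^ 2)) (hM.mono fun x hx => ?_)
    · simpa using this
    dsimp only
    rw [← sq_abs (u x).im]
    exact pow_le_pow_left₀ (abs_nonneg _) ((Complex.abs_im_le_norm _).trans hx) 2
  rw [Real.sqrt_le_left (by positivity)]
  nlinarith [mul_nonneg (mul_nonneg hr hδ) hM0, mul_le_mul_of_nonneg_left hI (sq_nonneg δ)]

theorem mul_sub_le_integral_norm_add_sub_mul {σ g : Ω → ℂ} {z b : ℂ} {α C : ℝ}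
    (hσ : Integrable σ μ) (hσ1 : ∀ᵐ x ∂μ, ‖σ x‖ ≤ 1) (hσα : α < ∫ x, ‖σ x‖ ^ 2 ∂μ)
    (hg : Integrable g μ) (hgC : ∀ᵐ x ∂μ, ‖g x‖ ≤ C * ‖z‖) :
    ‖b‖ * α - (1 + C) * ‖z‖ ≤ ∫ x, ‖z + g x - b * σ x‖ ∂μ := by
  have hσ_L1 : α ≤ ∫ x, ‖σ x‖ ∂μ := by
    refine hσα.le.trans (integral_mono_ae ?_ hσ.norm ?_)
    · refine .of_bound (hσ.norm.aestronglyMeasurable.pow 2) 1 ?_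
      filter_upwards [hσ1] with x hx
      rw [Real.norm_of_nonneg (sq_nonneg _)]
      exact pow_le_one₀ (norm_nonneg _) hx
    · filter_upwards [hσ1] with x hx
      nlinarith [norm_nonneg (σ x)]
  have hzg : ∫ x, ‖z + g x‖ ∂μ ≤ (1 + C) * ‖z‖ := by
    have := integral_mono_of_nonneg (.of_forall fun x => norm_nonneg (z + g x))
      (integrable_const ((1 + C) * ‖z‖)) (hgC.mono fun x hx => ?_)
    · simpa using this
    dsimp only
    grw [norm_add_le z (g x), hx]
    exact le_of_eq (by ring)
  have htriangle := integral_norm_le_integral_norm_add_integral_norm_sub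
    (F := fun x => b * σ x) (G := fun x => z + g x) (hσ.const_mul b) ((integrable_const z).add hg)
  simp only [norm_mul, integral_const_mul] at htriangle
  nlinarith [mul_le_mul_of_nonneg_left hσ_L1 (norm_nonneg b)]

theorem sqrt_norm_sq_add_le_integral_norm_add_sub_mul {σ g : Ω → ℂ} {z b : ℂ} {α C δ : ℝ}
    (hz : z ≠ 0) (hσ : Integrable σ μ) (hσ0 : ∫ x, σ x ∂μ = 0) (hσ1 : ∀ᵐ x ∂μ, ‖σ x‖ ≤ 1)
    (hσα : α < ∫ x, ‖σ x‖ ^ 2 ∂μ) (hg : Integrable g μ) (hg0 : ∫ x, g x ∂μ = 0)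
    (hgC : ∀ᵐ x ∂μ, ‖g x‖ ≤ C * ‖z‖) (hα : 0 < α) (hC : 0 ≤ C) (hδ : 0 ≤ δ) (hδα : δ ≤ α / 2)
    (hδK : δ ≤ 1 / (1 + C + 4 * (1 + C) / α)) :
    √(‖z‖ ^ 2 + δ ^ 2 * ∫ x, (((g x - b * σ x) * ((starRingEnd ℂ) z / (‖z‖ : ℂ))).im) ^ 2 ∂μ)
      ≤ ∫ x, ‖z + g x - b * σ x‖ ∂μ := by
  set r := ‖z‖
  have hr : 0 < r := norm_pos_iff.2 hz
  set w := (starRingEnd ℂ) z / (r : ℂ)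
  set u := fun x => (g x - b * σ x) * w
  have hw : ‖w‖ = 1 := Complex.norm_conj_div_norm_s7 hz
  have hu_int : Integrable u μ := (hg.sub (hσ.const_mul b)).mul_const w
  have hu_bd : ∀ᵐ x ∂μ, ‖u x‖ ≤ C * r + ‖b‖ := by
    filter_upwards [hσ1, hgC] with x hσx hgx
    rw [norm_mul, hw, mul_one]
    grw [norm_sub_le, norm_mul, hgx, hσx, mul_one]
  set K := 1 + C + 4 * (1 + C) / α
  have hK : 0 < K := by positivity
  have hδK' : δ * K ≤ 1 := (le_div_iff₀ hK).1 hδK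
  have hδ1 : δ ≤ 1 := by
    have : 1 ≤ K := by simp only [K]; linarith [show 0 ≤ 4 * (1 + C) / α by positivity]
    nlinarith
  rcases le_or_gt (α * ‖b‖) (4 * (1 + C) * r) with hb | hb
  · have hbr : ‖b‖ ≤ 4 * (1 + C) / α * r := by
      rw [div_mul_eq_mul_div, le_div_iff₀ hα]; linarith
    have hu_mean : ∫ x, u x ∂μ = 0 := by
      simp only [u, integral_mul_const, integral_sub hg (hσ.const_mul b), integral_const_mul,
        hg0, hσ0, mul_zero, sub_zero, zero_mul]
    have hδr : δ ^ 2 * (r + (C * r + ‖b‖)) ≤ r := by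
      have hKr : r + (C * r + ‖b‖) ≤ K * r := by
        rw [show K * r = r + C * r + 4 * (1 + C) / α * r by ring]; linarith
      calc δ ^ 2 * (r + (C * r + ‖b‖)) ≤ δ ^ 2 * (K * r) := by gcongr
        _ = δ * (δ * K) * r := by ring
        _ ≤ 1 * 1 * r := by gcongr
        _ = r := by ring
    calc _ ≤ ∫ x, ‖(r : ℂ) + u x‖ ∂μ :=
          sqrt_sq_add_mul_integral_im_sq_le_integral_norm_of_integral_eq_zero hr hu_int.1 hu_bd
            hu_mean hδr
      _ = _ := integral_congr_ae (.of_forall fun x => by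
          simpa [add_sub_assoc] using (Complex.norm_add_eq_norm_ofReal_norm_add_mul hz _).symm)
  · calc _ ≤ r + δ * (C * r + ‖b‖) := sqrt_sq_add_mul_integral_im_sq_le hr.le hδ hu_bd
      _ ≤ ‖b‖ * α - (1 + C) * r := by
        nlinarith [mul_le_mul_of_nonneg_right hδ1 (by positivity : 0 ≤ C * r),
          mul_le_mul_of_nonneg_right hδα (norm_nonneg b)]
      _ ≤ _ := mul_sub_le_integral_norm_add_sub_mul hσ hσ1 hσα hg hgC

end ProbabilitySpace

theorem perturbed_pointwise_estimate_general (α C : ℝ) (hα : 0 < α) (hC : 1 ≤ C)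
    (Ω : Type) [MeasurableSpace Ω] (μ : Measure Ω) [IsProbabilityMeasure μ] :
    ∃ δ : ℝ, 0 < δ ∧
    ∀ σ : Ω → ℂ, Measurable σ → (∫ x, σ x ∂μ) = 0 →
      (∀ᵐ x ∂μ, ‖σ x‖ ≤ 1) → α < (∫ x, (‖σ x‖) ^ 2 ∂μ) →
    ∀ z : ℂ, z ≠ 0 →
    ∀ g : Ω → ℂ, Measurable g → (∫ x, g x ∂μ) = 0 →
      (∀ᵐ x ∂μ, ‖g x‖ ≤ C * ‖z‖) →
    ∀ b : ℂ,
      (Real.sqrt ((‖z‖) ^ 2 + δ ^ 2 *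
          ∫ x, (((g x - b * σ x) * ((starRingEnd ℂ) z / (‖z‖ : ℂ))).im) ^ 2 ∂μ)
        ≤ ∫ x, ‖z + g x - b * σ x‖ ∂μ)
      ∧ ∀ f : Ω → ℂ, Integrable f μ →
          Real.sqrt ((‖z‖) ^ 2 + δ ^ 2 *
            ∫ x, (((g x - b * σ x) * ((starRingEnd ℂ) z / (‖z‖ : ℂ))).im) ^ 2 ∂μ)
          ≤ (∫ x, ‖z + f x - b * σ x‖ ∂μ)
            + ∫ x, ‖f x - g x‖ ∂μ := by
  have hC0 : 0 ≤ C := by linarith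
  refine ⟨min (α / 2) (1 / (1 + C + 4 * (1 + C) / α)), by positivity, ?_⟩
  intro σ hσ hσ0 hσ1 hσα z hz g hg hg0 hgC b
  have hσ_int : Integrable σ μ := .of_bound hσ.aestronglyMeasurable 1 hσ1
  have hg_int : Integrable g μ := .of_bound hg.aestronglyMeasurable _ hgC
  have hmain := sqrt_norm_sq_add_le_integral_norm_add_sub_mul (b := b) hz hσ_int hσ0 hσ1 hσα
    hg_int hg0 hgC hα hC0 (by positivity) (min_le_left _ _) (min_le_right _ _)
  refine ⟨hmain, fun f hf => hmain.trans ?_⟩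
  have hzf : Integrable (fun x => z + f x - b * σ x) μ :=
    ((integrable_const z).add hf).sub (hσ_int.const_mul b)
  have hzg : Integrable (fun x => z + g x - b * σ x) μ :=
    ((integrable_const z).add hg_int).sub (hσ_int.const_mul b)
  calc _ ≤ _ := integral_norm_le_integral_norm_add_integral_norm_sub hzg hzf
    _ = _ := by congr 2 with x; congr 1; ring

/-- For `0 < α ≤ 1`, `C ≥ 1` and a probability space `(Ω, ℙ)`, there is
`δ = δ(α, C) > 0` such that: if `σ : Ω → ℂ` has `∫ σ = 0`, `|σ| ≤ 1` a.s. and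
`∫ |σ|² > α`, `z ≠ 0`, `w = conj z / |z|`, and `g` has `∫ g = 0`, `|g| ≤ C|z|` a.s.,
then for every `b ∈ ℂ`, `y = Im ((g - bσ) w)` satisfies
`(|z|² + δ² ∫ y²)^{1/2} ≤ ∫ |z + g - bσ|`; consequently, for every integrable `f`,
`(|z|² + δ² ∫ y²)^{1/2} ≤ ∫ |z + f - bσ| + ∫ |f - g|`. -/
theorem perturbed_pointwise_estimate (α C : ℝ) (hα : 0 < α) (hα1 : α ≤ 1) (hC : 1 ≤ C)
    (Ω : Type) [MeasurableSpace Ω] (μ : Measure Ω) [IsProbabilityMeasure μ] :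
    ∃ δ : ℝ, 0 < δ ∧
    ∀ σ : Ω → ℂ, Measurable σ → (∫ x, σ x ∂μ) = 0 →
      (∀ᵐ x ∂μ, ‖σ x‖ ≤ 1) → α < (∫ x, (‖σ x‖) ^ 2 ∂μ) →
    ∀ z : ℂ, z ≠ 0 →
    ∀ g : Ω → ℂ, Measurable g → (∫ x, g x ∂μ) = 0 →
      (∀ᵐ x ∂μ, ‖g x‖ ≤ C * ‖z‖) →
    ∀ b : ℂ,
      (Real.sqrt ((‖z‖) ^ 2 + δ ^ 2 *
          ∫ x, (((g x - b * σ x) * ((starRingEnd ℂ) z / (‖z‖ : ℂ))).im) ^ 2 ∂μ)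
        ≤ ∫ x, ‖z + g x - b * σ x‖ ∂μ)
      ∧ ∀ f : Ω → ℂ, Integrable f μ →
          Real.sqrt ((‖z‖) ^ 2 + δ ^ 2 *
            ∫ x, (((g x - b * σ x) * ((starRingEnd ℂ) z / (‖z‖ : ℂ))).im) ^ 2 ∂μ)
          ≤ (∫ x, ‖z + f x - b * σ x‖ ∂μ)
            + ∫ x, ‖f x - g x‖ ∂μ :=
  perturbed_pointwise_estimate_general α C hα hC Ω μ
end
end

section
/- L² identity for the even part: let h ∈ H²₀(𝕋) and let u(z) = (h(z) + h(z̄))/2 be its even part, and set ⟨u,σ⟩ = ∫_𝕋 u·σ dm. Then for all w, b ∈ ℂ with |w| = 1: Im²(w·(⟨u,σ⟩ − b)) + Re²(w·⟨u,σ⟩) + ∫_𝕋 |u − ⟨u,σ⟩·σ|² dm = ∫_𝕋 Im²(w·(h − b·σ)) dm. -/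
open MeasureTheory Complex

noncomputable section

instance fact2pi : Fact (0 < 2 * Real.pi) := ⟨Real.two_pi_pos⟩

/-- The circle `𝕋`, modeled as `ℝ / 2πℤ`. -/
abbrev Torus := AddCircle (2 * Real.pi)

/-- The normalized Haar (probability) measure on `𝕋`. -/
def haarT : Measure Torus := AddCircle.haarAddCircle

/-- The cosine `cos θ` of a point `e^{iθ}` of `𝕋`. -/
def cosT (y : Torus) : ℝ := (AddCircle.toCircle y : ℂ).re

/-- The Rademacher function `σ(e^{iθ}) = sign (cos θ)` on `𝕋`. -/
def radT (y : Torus) : ℝ := Real.sign (cosT y)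

/-! Because `h ∈ H²₀`, both `conj h` and `h(-·)` have their spectrum in the negative integers,
so they are orthogonal to `h`. The first gives `∫ h² = 0`, hence `∫ Im²(w h) = ‖h‖² / 2`; the
second gives `‖u‖² = ‖h‖² / 2`. Since `σ` is even with `σ² = 1` a.e., `⟨u, σ⟩ = ⟨h, σ⟩`, and
expanding the squares on both sides reduces the identity to
`‖h‖²/2 - 2 Im(w b) Im(w ⟨h,σ⟩) + Im²(w b)` on each side. -/

open scoped ComplexConjugate
open AddCircle

section Fourier

variable {T : ℝ} [Fact (0 < T)]

theorem fourierCoeff_comp_neg (f : AddCircle T → ℂ) (n : ℤ) :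
    fourierCoeff (fun t => f (-t)) n = fourierCoeff f (-n) := by
  simp only [fourierCoeff]
  rw [← integral_neg_eq_self]
  simp only [neg_neg, fourier_apply, smul_neg, neg_smul]

theorem fourierCoeff_conj (f : AddCircle T → ℂ) (n : ℤ) :
    fourierCoeff (fun t => conj (f t)) n = conj (fourierCoeff f (-n)) := by
  simp only [fourierCoeff, smul_eq_mul, ← integral_conj, map_mul, ← fourier_neg, neg_neg]

theorem integral_conj_mul_eq_zero_of_fourierCoeff {f g : AddCircle T → ℂ}
    (hf : MemLp f 2 haarAddCircle) (hg : MemLp g 2 haarAddCircle)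
    (hfg : ∀ n, fourierCoeff f n = 0 ∨ fourierCoeff g n = 0) :
    ∫ t, conj (f t) * g t ∂haarAddCircle = 0 := by
  have repr_toLp : ∀ {k : AddCircle T → ℂ} (hk : MemLp k 2 haarAddCircle) (n : ℤ),
      fourierBasis.repr (hk.toLp k) n = fourierCoeff k n := fun hk n => by
    rw [fourierBasis_repr, fourierCoeff_congr_ae hk.coeFn_toLp]
  calc ∫ t, conj (f t) * g t ∂haarAddCircle
      = inner ℂ (hf.toLp f) (hg.toLp g) := by
        rw [L2.inner_def]
        refine integral_congr_ae ?_
        filter_upwards [hf.coeFn_toLp, hg.coeFn_toLp] with t hft hgt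
        rw [hft, hgt, RCLike.inner_apply, mul_comm]
    _ = ∑' n, inner ℂ (hf.toLp f) (fourierBasis n) * inner ℂ (fourierBasis n) (hg.toLp g) :=
        (fourierBasis.tsum_inner_mul_inner _ _).symm
    _ = ∑' _ : ℤ, (0 : ℂ) := tsum_congr fun n => by
        rw [← inner_conj_symm, ← HilbertBasis.repr_apply_apply, ← HilbertBasis.repr_apply_apply,
          repr_toLp, repr_toLp]
        rcases hfg n with h | h <;> simp [h]
    _ = 0 := tsum_zero

theorem integral_mul_self_eq_zero_of_fourierCoeff_nonpos {h : AddCircle T → ℂ}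
    (hL2 : MemLp h 2 haarAddCircle) (hHardy : ∀ n : ℤ, n ≤ 0 → fourierCoeff h n = 0) :
    ∫ t, h t * h t ∂haarAddCircle = 0 := by
  simpa using integral_conj_mul_eq_zero_of_fourierCoeff hL2.star hL2 fun n => by
    rcases le_or_gt n 0 with hn | hn
    · exact .inr (hHardy n hn)
    · refine .inl ?_
      rw [show star h = fun t => conj (h t) from rfl, fourierCoeff_conj, hHardy (-n) (by omega),
        map_zero]

theorem integral_conj_mul_comp_neg_eq_zero_of_fourierCoeff_nonpos {h : AddCircle T → ℂ}
    (hL2 : MemLp h 2 haarAddCircle) (hHardy : ∀ n : ℤ, n ≤ 0 → fourierCoeff h n = 0) :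
    ∫ t, conj (h t) * h (-t) ∂haarAddCircle = 0 := by
  refine integral_conj_mul_eq_zero_of_fourierCoeff hL2
    (hL2.comp_measurePreserving (Measure.measurePreserving_neg _)) fun n => ?_
  rcases le_or_gt n 0 with hn | hn
  · exact .inl (hHardy n hn)
  · exact .inr (by rw [fourierCoeff_comp_neg, hHardy (-n) (by omega)])

end Fourier

section Integrals

variable {α 𝕜 : Type*} [MeasurableSpace α] {μ : Measure α} [RCLike 𝕜]

theorem integral_norm_add_sq {f g : α → 𝕜} (hf : MemLp f 2 μ) (hg : MemLp g 2 μ) :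
    ∫ x, ‖f x + g x‖ ^ 2 ∂μ
      = ∫ x, ‖f x‖ ^ 2 ∂μ + 2 * RCLike.re (∫ x, conj (f x) * g x ∂μ) + ∫ x, ‖g x‖ ^ 2 ∂μ := by
  have hfg : Integrable (fun x => conj (f x) * g x) μ := hf.star.integrable_mul hg
  simp_rw [@norm_add_sq 𝕜, RCLike.inner_apply, mul_comm (g _)]
  rw [integral_add ?_ hg.norm.integrable_sq,
    integral_add hf.norm.integrable_sq (hfg.re.const_mul 2), integral_const_mul, integral_re hfg]
  exact hf.norm.integrable_sq.add (hfg.re.const_mul 2)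

theorem integral_norm_sub_mul_sq {f : α → 𝕜} {s : α → ℝ} (hf : MemLp f 2 μ) (hs : MemLp s 2 μ)
    (a : 𝕜) :
    ∫ x, ‖f x - a * s x‖ ^ 2 ∂μ
      = ∫ x, ‖f x‖ ^ 2 ∂μ - 2 * RCLike.re (conj a * ∫ x, f x * s x ∂μ)
        + ‖a‖ ^ 2 * ∫ x, s x ^ 2 ∂μ := by
  have hfs : Integrable (fun x => conj a * (f x * s x)) μ :=
    (hf.integrable_mul hs.ofReal).const_mul _
  have hpt : ∀ x, ‖f x - a * s x‖ ^ 2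
      = ‖f x‖ ^ 2 - 2 * RCLike.re (conj a * (f x * s x)) + ‖a‖ ^ 2 * s x ^ 2 := fun x => by
    rw [@norm_sub_sq 𝕜, RCLike.inner_apply, ← RCLike.conj_re, norm_mul, RCLike.norm_ofReal,
      mul_pow, sq_abs]
    simp only [map_mul, RCLike.conj_ofReal, RCLike.conj_conj]
    ring_nf
  simp_rw [hpt]
  rw [integral_add ?_ (hs.integrable_sq.const_mul _),
    integral_sub hf.norm.integrable_sq (hfs.re.const_mul 2), integral_const_mul,
    integral_const_mul, integral_re hfs, integral_const_mul]
  exact hf.norm.integrable_sq.sub (hfs.re.const_mul 2)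

theorem integral_im_sq_of_integral_mul_self_eq_zero {f : α → ℂ} (hf : MemLp f 2 μ)
    (h0 : ∫ x, f x * f x ∂μ = 0) :
    ∫ x, (f x).im ^ 2 ∂μ = (∫ x, ‖f x‖ ^ 2 ∂μ) / 2 := by
  have hff : Integrable (fun x => f x * f x) μ := hf.integrable_mul hf
  have hpt : ∀ z : ℂ, z.im ^ 2 = ‖z‖ ^ 2 / 2 - (z * z).re / 2 := fun z => by
    rw [Complex.sq_norm, Complex.normSq_apply, Complex.mul_re]; ring
  simp_rw [hpt, ← RCLike.re_to_complex]
  rw [integral_sub (hf.norm.integrable_sq.div_const 2) (hff.re.div_const 2), integral_div,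
    integral_div, integral_re hff, h0, map_zero, zero_div, sub_zero]

theorem integral_im_mul_ofReal {f : α → ℂ} {s : α → ℝ}
    (hfs : Integrable (fun x => f x * s x) μ) :
    ∫ x, (f x).im * s x ∂μ = (∫ x, f x * s x ∂μ).im := by
  simp_rw [← Complex.im_mul_ofReal]
  exact integral_im hfs

end Integrals

section EvenPart

variable {G 𝕜 : Type*} [MeasurableSpace G] [AddGroup G] [MeasurableNeg G] {μ : Measure G}
  [μ.IsNegInvariant] [RCLike 𝕜]

theorem integral_norm_even_part_sq {h : G → 𝕜} (hL2 : MemLp h 2 μ)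
    (horth : ∫ x, conj (h x) * h (-x) ∂μ = 0) :
    ∫ x, ‖(h x + h (-x)) / 2‖ ^ 2 ∂μ = (∫ x, ‖h x‖ ^ 2 ∂μ) / 2 := by
  have hneg : MemLp (fun x => h (-x)) 2 μ :=
    hL2.comp_measurePreserving (Measure.measurePreserving_neg μ)
  simp_rw [norm_div, div_pow, RCLike.norm_two]
  rw [integral_div, integral_norm_add_sq hL2 hneg, horth, map_zero, mul_zero, add_zero,
    integral_neg_eq_self (fun x => ‖h x‖ ^ 2)]
  ring

theorem integral_even_part_mul_of_even {f g : G → 𝕜} (hg : ∀ x, g (-x) = g x)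
    (hfg : Integrable (fun x => f x * g x) μ) :
    ∫ x, (f x + f (-x)) / 2 * g x ∂μ = ∫ x, f x * g x ∂μ := by
  have hneg : ∫ x, f (-x) * g x ∂μ = ∫ x, f x * g x ∂μ := by
    simpa only [hg] using integral_neg_eq_self (fun x => f x * g x) μ
  have hfg' : Integrable (fun x => f (-x) * g x) μ := by
    simpa only [hg] using hfg.comp_neg
  simp_rw [add_div, add_mul]
  rw [integral_add (by simpa only [div_mul_eq_mul_div] using hfg.div_const 2)
    (by simpa only [div_mul_eq_mul_div] using hfg'.div_const 2)]
  simp_rw [div_mul_eq_mul_div]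
  rw [integral_div, integral_div, hneg]
  ring

end EvenPart

section Rademacher

instance : IsProbabilityMeasure haarT := inferInstanceAs (IsProbabilityMeasure haarAddCircle)

instance : haarT.IsNegInvariant :=
  inferInstanceAs (haarAddCircle (T := 2 * Real.pi)).IsNegInvariant

theorem cosT_coe (θ : ℝ) : cosT θ = Real.cos θ := by
  rw [cosT, toCircle_apply_mk, div_self Real.two_pi_pos.ne', one_mul, Circle.coe_exp,
    Complex.exp_ofReal_mul_I_re]

theorem radT_neg (y : Torus) : radT (-y) = radT y := by
  induction y using QuotientAddGroup.induction_on with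
  | H θ => rw [← AddCircle.coe_neg, radT, radT, cosT_coe, cosT_coe, Real.cos_neg]

theorem continuous_cosT : Continuous cosT :=
  Complex.continuous_re.comp (continuous_subtype_val.comp continuous_toCircle)

theorem measurable_radT : Measurable radT := by
  have hsign : Measurable Real.sign :=
    Measurable.ite measurableSet_Iio measurable_const
      (Measurable.ite measurableSet_Ioi measurable_const measurable_const)
  exact hsign.comp continuous_cosT.measurable

theorem abs_radT_le_one (y : Torus) : |radT y| ≤ 1 := by
  rcases Real.sign_apply_eq (cosT y) with h | h | h <;> simp [radT, h]

theorem ae_cosT_ne_zero : ∀ᵐ y ∂haarT, cosT y ≠ 0 := by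
  have hT : ENNReal.ofReal (2 * Real.pi) ≠ 0 := by simp [Real.pi_pos]
  have hac : haarT ≪ volume := by
    rw [volume_eq_smul_haarAddCircle]; exact Measure.absolutelyContinuous_smul hT
  refine hac.ae_le (ae_iff.2 ?_)
  simp only [ne_eq, not_not]
  have hzeros : volume {θ : ℝ | Real.cos θ = 0} = 0 := by
    refine measure_mono_null (fun θ hθ => ?_)
      ((Set.countable_range fun k : ℤ => (2 * (k : ℝ) + 1) * Real.pi / 2).measure_zero _)
    obtain ⟨k, hk⟩ := Real.cos_eq_zero_iff.mp hθ
    exact ⟨k, hk.symm⟩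
  have hmeas : MeasurableSet {y : Torus | cosT y = 0} :=
    measurableSet_eq_fun continuous_cosT.measurable measurable_const
  rw [← (AddCircle.measurePreserving_mk (2 * Real.pi) 0).measure_preimage
    hmeas.nullMeasurableSet]
  refine nonpos_iff_eq_zero.1 ((Measure.restrict_apply_le _ _).trans_eq ?_)
  simpa only [Set.preimage_ofPred_eq, cosT_coe] using hzeros

theorem ae_radT_sq_eq_one : ∀ᵐ y ∂haarT, radT y ^ 2 = 1 := by
  filter_upwards [ae_cosT_ne_zero] with y hy
  rcases Real.sign_apply_eq_of_ne_zero _ hy with h | h <;> simp [radT, h]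

theorem memLp_radT : MemLp radT 2 haarT :=
  .of_bound measurable_radT.aestronglyMeasurable 1 (.of_forall abs_radT_le_one)

theorem integral_radT_sq : ∫ y, radT y ^ 2 ∂haarT = 1 := by
  rw [integral_congr_ae ae_radT_sq_eq_one]
  simp

end Rademacher

section EvenPartIdentity

variable {h : Torus → ℂ}

theorem integral_im_mul_sq_of_fourierCoeff_nonpos (hL2 : MemLp h 2 haarT)
    (hHardy : ∀ n : ℤ, n ≤ 0 → fourierCoeff h n = 0) {w : ℂ} (hw : ‖w‖ = 1) :
    ∫ y, (w * h y).im ^ 2 ∂haarT = (∫ y, ‖h y‖ ^ 2 ∂haarT) / 2 := by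
  rw [integral_im_sq_of_integral_mul_self_eq_zero (hL2.const_mul w)]
  · simp only [norm_mul, hw, one_mul]
  · simp_rw [mul_mul_mul_comm w]
    rw [integral_const_mul]
    exact mul_eq_zero_of_right _ (integral_mul_self_eq_zero_of_fourierCoeff_nonpos hL2 hHardy)

theorem integral_norm_even_part_sub_mul_radT_sq (hL2 : MemLp h 2 haarT)
    (hHardy : ∀ n : ℤ, n ≤ 0 → fourierCoeff h n = 0) (c : ℂ)
    (hc : c = ∫ y, (h y + h (-y)) / 2 * (radT y : ℂ) ∂haarT) :
    ∫ y, ‖(h y + h (-y)) / 2 - c * (radT y : ℂ)‖ ^ 2 ∂haarT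
      = (∫ y, ‖h y‖ ^ 2 ∂haarT) / 2 - ‖c‖ ^ 2 := by
  have hneg : MemLp (fun y => h (-y)) 2 haarT :=
    hL2.comp_measurePreserving (Measure.measurePreserving_neg _)
  have hu : MemLp (fun y => (h y + h (-y)) / 2) 2 haarT := by
    simpa only [div_eq_mul_inv, mul_comm _ (2⁻¹ : ℂ), Pi.add_apply]
      using (hL2.add hneg).const_mul (2⁻¹ : ℂ)
  have hexpand := integral_norm_sub_mul_sq hu memLp_radT c
  rw [RCLike.ofReal_eq_complex_ofReal, ← hc] at hexpand
  rw [hexpand, integral_norm_even_part_sq hL2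
      (integral_conj_mul_comp_neg_eq_zero_of_fourierCoeff_nonpos hL2 hHardy),
    integral_radT_sq, RCLike.conj_mul, ← RCLike.ofReal_pow, RCLike.ofReal_re]
  ring

theorem integral_im_mul_sub_mul_radT_sq (hL2 : MemLp h 2 haarT)
    (hHardy : ∀ n : ℤ, n ≤ 0 → fourierCoeff h n = 0) {w : ℂ} (hw : ‖w‖ = 1) (b : ℂ) :
    ∫ y, (w * (h y - b * (radT y : ℂ))).im ^ 2 ∂haarT
      = (∫ y, ‖h y‖ ^ 2 ∂haarT) / 2
        - 2 * (w * b).im * (w * ∫ y, h y * (radT y : ℂ) ∂haarT).im + (w * b).im ^ 2 := by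
  have hpt : ∀ y, (w * (h y - b * (radT y : ℂ))).im = (w * h y).im - (w * b).im * radT y :=
    fun y => by rw [mul_sub, ← mul_assoc, Complex.sub_im, Complex.im_mul_ofReal]
  have hexpand := integral_norm_sub_mul_sq (𝕜 := ℝ) (hL2.const_mul w).im memLp_radT (w * b).im
  simp only [Real.norm_eq_abs, sq_abs, RCLike.ofReal_real_eq_id, id_eq, RCLike.conj_to_real,
    RCLike.re_to_real, RCLike.im_to_complex] at hexpand
  simp_rw [hpt, hexpand, integral_im_mul_sq_of_fourierCoeff_nonpos hL2 hHardy hw,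
    integral_radT_sq, integral_im_mul_ofReal (f := fun y => w * h y) (s := radT)
      ((hL2.const_mul w).integrable_mul memLp_radT.ofReal), mul_assoc, integral_const_mul]
  ring

end EvenPartIdentity

/-- **L² identity for the even part.** Let `h ∈ H²₀(𝕋)`, `u(z) = (h(z) + h(z̄))/2` its
even part (on `𝕋 = ℝ/2πℤ` conjugation is `z ↦ -z`), and `⟨u, σ⟩ = ∫ u σ dm`. Then for
all `w, b ∈ ℂ` with `|w| = 1`:
`Im²(w(⟨u,σ⟩ - b)) + Re²(w ⟨u,σ⟩) + ∫ |u - ⟨u,σ⟩ σ|² = ∫ Im²(w (h - b σ))`. -/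
theorem even_part_identity (h : Torus → ℂ) (hL2 : MemLp h 2 haarT)
    (hHardy : ∀ m : ℤ, m ≤ 0 → fourierCoeff h m = 0)
    (w b : ℂ) (hw : ‖w‖ = 1) :
    ((w * ((∫ y, (h y + h (-y)) / 2 * (radT y : ℂ) ∂haarT) - b)).im) ^ 2
      + ((w * (∫ y, (h y + h (-y)) / 2 * (radT y : ℂ) ∂haarT)).re) ^ 2
      + (∫ y, (‖(h y + h (-y)) / 2
          - (∫ y', (h y' + h (-y')) / 2 * (radT y' : ℂ) ∂haarT) * (radT y : ℂ)‖) ^ 2 ∂haarT)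
    = ∫ y, ((w * (h y - b * (radT y : ℂ))).im) ^ 2 ∂haarT := by
  set c := ∫ y, (h y + h (-y)) / 2 * (radT y : ℂ) ∂haarT with hc
  have hc_even : c = ∫ y, h y * (radT y : ℂ) ∂haarT :=
    integral_even_part_mul_of_even (fun y => by rw [radT_neg])
      (hL2.integrable_mul memLp_radT.ofReal)
  have hnorm_c : ‖c‖ ^ 2 = (w * c).re ^ 2 + (w * c).im ^ 2 := by
    rw [← one_mul (‖c‖ ^ 2), ← one_pow 2, ← hw, ← mul_pow, ← norm_mul, Complex.sq_norm,
      Complex.normSq_apply]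
    ring
  rw [integral_norm_even_part_sub_mul_radT_sq hL2 hHardy c hc,
    integral_im_mul_sub_mul_radT_sq hL2 hHardy hw b, ← hc_even, hnorm_c, mul_sub, Complex.sub_im]
  ring
end
end
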